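/- arXiv:quant-ph/0609181 — 8 statements merged into one kernel-verified Lean document; each statement's English description precedes it below -/
import Mathlib

section
/- In an e-ring, for every g ∈ G we have g² ∈ E⁺, and for all g,h ∈ G, gh + hg ∈ G. -/
/-- An e-ring: an associative unital ring `R` together with a set `E` of effects.
`E⁺` is the additive submonoid generated by `E` (the set of finite sums of effects). -/
structure ERing (R : Type*) [Ring R] where
  E : Set R
  zero_mem : (0:R) ∈ E
  one_mem : (1:R) ∈ E
  compl_mem : ∀ e ∈ E, 1 - e ∈ E
  ax_i : ∀ a ∈ AddSubmonoid.closure E, -a ∈ AddSubmonoid.closure E → a = 0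
  ax_ii : ∀ a ∈ AddSubmonoid.closure E, 1 - a ∈ AddSubmonoid.closure E → a ∈ E
  ax_iii : ∀ a ∈ AddSubmonoid.closure E, ∀ b ∈ AddSubmonoid.closure E,
    a * b = b * a → a * b ∈ AddSubmonoid.closure E
  ax_iv : ∀ a ∈ AddSubmonoid.closure E, ∀ b ∈ AddSubmonoid.closure E,
    a * b * a ∈ AddSubmonoid.closure E
  ax_v : ∀ a ∈ AddSubmonoid.closure E, ∀ b ∈ AddSubmonoid.closure E,
    a * b * a = 0 → a * b = 0 ∧ b * a = 0
  ax_vi : ∀ a ∈ AddSubmonoid.closure E, ∀ b ∈ AddSubmonoid.closure E,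
    (a - b) * (a - b) ∈ AddSubmonoid.closure E

namespace ERing

variable {R : Type*} [Ring R]

/-- The positive cone `E⁺`: all finite sums of effects. -/
def Ep (S : ERing R) : Set R := (AddSubmonoid.closure S.E : Set R)

/-- The directed group `G = E⁺ − E⁺` (as a subset of `R`). -/
def G (S : ERing R) : Set R := {x | ∃ a ∈ S.Ep, ∃ b ∈ S.Ep, x = a - b}

/-- The partial order with positive cone `E⁺`: `g ≤ h` iff `h − g ∈ E⁺`. -/
def le (S : ERing R) (g h : R) : Prop := h - g ∈ S.Ep

/-- The set of projections: idempotent elements of `G`. -/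
def P (S : ERing R) : Set R := {p | p ∈ S.G ∧ p * p = p}

end ERing

namespace ERing

variable {R : Type*} [Ring R] (S : ERing R)

theorem mul_self_mem_Ep {g : R} (hg : g ∈ S.G) : g * g ∈ S.Ep := by
  obtain ⟨a, ha, b, hb, rfl⟩ := hg
  exact S.ax_vi a ha b hb

theorem add_mem_G {g h : R} (hg : g ∈ S.G) (hh : h ∈ S.G) : g + h ∈ S.G := by
  obtain ⟨a, ha, b, hb, rfl⟩ := hg
  obtain ⟨c, hc, d, hd, rfl⟩ := hh
  exact ⟨a + c, add_mem ha hc, b + d, add_mem hb hd, by abel⟩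

theorem mul_add_mul_mem_G {g h : R} (hg : g ∈ S.G) (hh : h ∈ S.G) :
    g * h + h * g ∈ S.G :=
  ⟨(g + h) * (g + h), S.mul_self_mem_Ep (S.add_mem_G hg hh), g * g + h * h,
    add_mem (S.mul_self_mem_Ep hg) (S.mul_self_mem_Ep hh), by noncomm_ring⟩

end ERing

theorem stmt1 {R : Type*} [Ring R] (S : ERing R) :
    (∀ g ∈ S.G, g * g ∈ S.Ep) ∧
    (∀ g ∈ S.G, ∀ h ∈ S.G, g * h + h * g ∈ S.G) :=
  ⟨fun _ hg => S.mul_self_mem_Ep hg, fun _ hg _ hh => S.mul_add_mul_mem_G hg hh⟩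
end

section
/- In an e-ring, every projection p (i.e., p ∈ G with p² = p) satisfies 0 ≤ p ≤ 1, i.e., p ∈ E; moreover 1−p is also a projection. -/
theorem stmt3 {R : Type*} [Ring R] (S : ERing R) :
    ∀ p ∈ S.P, S.le 0 p ∧ S.le p 1 ∧ p ∈ S.E ∧ (1 - p) ∈ S.P := by
  rintro p ⟨⟨a, ha, b, hb, rfl⟩, hidem⟩
  have h1 : (1 : R) ∈ AddSubmonoid.closure S.E := AddSubmonoid.subset_closure S.one_mem
  -- p ∈ E⁺
  have hp : (a - b) ∈ AddSubmonoid.closure S.E := by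
    have := S.ax_vi a ha b hb
    rwa [hidem] at this
  have habel : (1 : R) + b - a = 1 - (a - b) := by abel
  -- idempotent of 1 - p
  have hqi : (1 - (a - b)) * (1 - (a - b)) = 1 - (a - b) := by
    have : (1 - (a - b)) * (1 - (a - b))
        = 1 - (a - b) - (a - b) + (a - b) * (a - b) := by noncomm_ring
    rw [this, hidem]; abel
  -- 1 - p ∈ E⁺
  have hq : (1 - (a - b)) ∈ AddSubmonoid.closure S.E := by
    have h1b : (1 + b) ∈ AddSubmonoid.closure S.E := AddSubmonoid.add_mem _ h1 hb
    have := S.ax_vi (1 + b) h1b a ha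
    rwa [habel, hqi] at this
  refine ⟨?_, ?_, ?_, ?_, hqi⟩
  · simpa [ERing.le, ERing.Ep] using hp
  · exact hq
  · exact S.ax_ii _ hp hq
  · exact ⟨1 + b, AddSubmonoid.add_mem _ h1 hb, a, ha, habel.symm⟩
end

section
/- In an e-ring, if d,e,f ∈ E and ef = fe, then 0 ≤ ef ≤ e, 0 ≤ ede ≤ e² ≤ e ≤ 1, e,f ≤ e+f−ef ≤ 1, and 0 ≤ e−e² ≤ e, 1−e. -/
/-!
Each inequality says that a difference lies in `E⁺`, and each difference factors as
`e (1 - f)`, `(1 - e) f`, `(1 - e)(1 - f)`, `e (1 - d) e`, ... Since `1 - e` and `1 - f` are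
again effects commuting with `e` and `f`, axiom (iii) puts the commuting products in `E⁺`
and axiom (iv) the sandwiches `e x e`.
-/

namespace ERing

variable {R : Type*} [Ring R] (S : ERing R) {a b d e f : R}

theorem le_def : S.le a b ↔ b - a ∈ S.Ep := Iff.rfl

theorem mem_Ep_of_mem (he : e ∈ S.E) : e ∈ S.Ep := AddSubmonoid.subset_closure he

theorem mul_mem_Ep_of_commute (he : e ∈ S.E) (hf : f ∈ S.E) (h : Commute e f) :
    e * f ∈ S.Ep :=
  S.ax_iii e (S.mem_Ep_of_mem he) f (S.mem_Ep_of_mem hf) h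

theorem le_one_of_mem (he : e ∈ S.E) : S.le e 1 :=
  S.mem_Ep_of_mem (S.compl_mem e he)

theorem mul_nonneg_of_commute (he : e ∈ S.E) (hf : f ∈ S.E) (h : Commute e f) :
    S.le 0 (e * f) := by
  rw [le_def, sub_zero]
  exact S.mul_mem_Ep_of_commute he hf h

theorem mul_le_left_of_commute (he : e ∈ S.E) (hf : f ∈ S.E) (h : Commute e f) :
    S.le (e * f) e := by
  rw [le_def, ← mul_one_sub]
  exact S.mul_mem_Ep_of_commute he (S.compl_mem f hf) ((Commute.one_right e).sub_right h)

theorem mul_self_le (he : e ∈ S.E) : S.le (e * e) e :=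
  S.mul_le_left_of_commute he he (Commute.refl e)

theorem conj_nonneg (ha : a ∈ S.Ep) (hb : b ∈ S.Ep) : S.le 0 (a * b * a) := by
  rw [le_def, sub_zero]
  exact S.ax_iv a ha b hb

theorem conj_le_mul_self (ha : a ∈ S.Ep) (hd : d ∈ S.E) : S.le (a * d * a) (a * a) := by
  rw [le_def, show a * a - a * d * a = a * (1 - d) * a by noncomm_ring]
  exact S.ax_iv a ha _ (S.mem_Ep_of_mem (S.compl_mem d hd))

theorem le_add_sub_mul_left (he : e ∈ S.E) (hf : f ∈ S.E) (h : Commute e f) :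
    S.le e (e + f - e * f) := by
  rw [le_def, show e + f - e * f - e = (1 - e) * f by noncomm_ring]
  exact S.mul_mem_Ep_of_commute (S.compl_mem e he) hf ((Commute.one_left f).sub_left h)

theorem le_add_sub_mul_right (he : e ∈ S.E) (hf : f ∈ S.E) (h : Commute e f) :
    S.le f (e + f - e * f) := by
  rw [show e + f - e * f = f + e - f * e by rw [h.eq]; abel]
  exact S.le_add_sub_mul_left hf he h.symm

theorem add_sub_mul_le_one (he : e ∈ S.E) (hf : f ∈ S.E) (h : Commute e f) :
    S.le (e + f - e * f) 1 := by
  rw [le_def, show 1 - (e + f - e * f) = (1 - e) * (1 - f) by noncomm_ring]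
  exact S.mul_mem_Ep_of_commute (S.compl_mem e he) (S.compl_mem f hf)
    ((Commute.one_right _).sub_right ((Commute.one_left f).sub_left h))

theorem sub_mul_self_nonneg (he : e ∈ S.E) : S.le 0 (e - e * e) := by
  rw [le_def, sub_zero, ← mul_one_sub]
  exact S.mul_mem_Ep_of_commute he (S.compl_mem e he) ((Commute.one_right e).sub_right rfl)

theorem sub_mul_self_le (he : e ∈ S.E) : S.le (e - e * e) e := by
  rw [le_def, sub_sub_cancel]
  exact S.mul_mem_Ep_of_commute he he (Commute.refl e)

theorem sub_mul_self_le_one_sub (he : e ∈ S.E) : S.le (e - e * e) (1 - e) := by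
  rw [le_def, show 1 - e - (e - e * e) = (1 - e) * (1 - e) by noncomm_ring]
  exact S.mul_mem_Ep_of_commute (S.compl_mem e he) (S.compl_mem e he) (Commute.refl _)

end ERing

theorem stmt4 {R : Type*} [Ring R] (S : ERing R) :
    ∀ d ∈ S.E, ∀ e ∈ S.E, ∀ f ∈ S.E, e * f = f * e →
      S.le 0 (e * f) ∧ S.le (e * f) e ∧
      S.le 0 (e * d * e) ∧ S.le (e * d * e) (e * e) ∧ S.le (e * e) e ∧ S.le e 1 ∧
      S.le e (e + f - e * f) ∧ S.le f (e + f - e * f) ∧ S.le (e + f - e * f) 1 ∧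
      S.le 0 (e - e * e) ∧ S.le (e - e * e) e ∧ S.le (e - e * e) (1 - e) := by
  intro d hd e he f hf hef
  have he' := S.mem_Ep_of_mem he
  exact ⟨S.mul_nonneg_of_commute he hf hef, S.mul_le_left_of_commute he hf hef,
    S.conj_nonneg he' (S.mem_Ep_of_mem hd), S.conj_le_mul_self he' hd, S.mul_self_le he,
    S.le_one_of_mem he, S.le_add_sub_mul_left he hf hef, S.le_add_sub_mul_right he hf hef,
    S.add_sub_mul_le_one he hf hef, S.sub_mul_self_nonneg he, S.sub_mul_self_le he,
    S.sub_mul_self_le_one_sub he⟩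
end

section
/- In an e-ring, for g,h ∈ E⁺: (i) gh = 0 implies hg = 0; and (ii) if gh = hg and g ≤ h, then g² ≤ h². -/
namespace ERing

variable {R : Type*} [Ring R] (S : ERing R) {g h : R}

theorem mul_eq_zero_symm (hg : g ∈ S.Ep) (hh : h ∈ S.Ep) (hgh : g * h = 0) : h * g = 0 :=
  (S.ax_v g hg h hh (by rw [hgh, zero_mul])).2

theorem mul_self_le_mul_self (hg : g ∈ S.Ep) (hh : h ∈ S.Ep) (hc : Commute g h)
    (hle : S.le g h) : S.le (g * g) (h * h) := by
  have hcomm : Commute (h + g) (h - g) :=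
    ((Commute.refl h).add_left hc).sub_right (hc.symm.add_left (Commute.refl g))
  rw [le, hc.symm.mul_self_sub_mul_self_eq]
  exact S.ax_iii _ (add_mem hh hg) _ hle hcomm.eq

end ERing

theorem stmt5 {R : Type*} [Ring R] (S : ERing R) :
    ∀ g ∈ S.Ep, ∀ h ∈ S.Ep,
      (g * h = 0 → h * g = 0) ∧
      (g * h = h * g → S.le g h → S.le (g * g) (h * h)) := by
  intro g hg h hh
  exact ⟨S.mul_eq_zero_symm hg hh, fun hc => S.mul_self_le_mul_self hg hh hc⟩
end

section
/- In an e-ring, if g ∈ E⁺, p is a projection, and g ≤ n·p for some positive integer n, then g = gp = pg. -/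
/-! Writing `q = 1 - p`, the complementary idempotent `q` lies in `E⁺` (it is the square of an
element of `G`). From `0 ≤ g ≤ n p` and `q p = 0` we get `0 ≤ q g q ≤ q (n p) q = 0`, so `q g q = 0`,
and axiom (v) upgrades this to `q g = g q = 0`, i.e. `g = p g = g p`. -/

namespace ERing

variable {R : Type*} [Ring R] (S : ERing R) {g h p q x : R}

theorem one_mem_Ep : (1 : R) ∈ S.Ep :=
  AddSubmonoid.subset_closure S.one_mem

theorem one_sub_mem_G (hx : x ∈ S.G) : 1 - x ∈ S.G := by
  obtain ⟨a, ha, b, hb, rfl⟩ := hx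
  exact ⟨1 + b, AddSubmonoid.add_mem _ S.one_mem_Ep hb, a, ha, by abel⟩

theorem mul_self_mem_Ep_s6 (hx : x ∈ S.G) : x * x ∈ S.Ep := by
  obtain ⟨a, ha, b, hb, rfl⟩ := hx
  exact S.ax_vi a ha b hb

theorem mem_Ep_of_mem_P (hp : p ∈ S.P) : p ∈ S.Ep :=
  hp.2 ▸ S.mul_self_mem_Ep_s6 hp.1

theorem one_sub_mem_P (hp : p ∈ S.P) : 1 - p ∈ S.P :=
  ⟨S.one_sub_mem_G hp.1, IsIdempotentElem.one_sub hp.2⟩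

theorem mul_eq_zero_and_eq_zero_of_le (hq : q ∈ S.Ep) (hg : g ∈ S.Ep) (hgh : S.le g h)
    (hqhq : q * h * q = 0) : q * g = 0 ∧ g * q = 0 := by
  have hqgq : q * g * q ∈ S.Ep := S.ax_iv q hq g hg
  have hneg : -(q * g * q) ∈ S.Ep := by
    have hdiff : q * (h - g) * q ∈ S.Ep := S.ax_iv q hq (h - g) hgh
    rwa [mul_sub, sub_mul, hqhq, zero_sub] at hdiff
  exact S.ax_v q hq g hg (S.ax_i _ hqgq hneg)

end ERing

theorem stmt6 {R : Type*} [Ring R] (S : ERing R) :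
    ∀ g ∈ S.Ep, ∀ p ∈ S.P, ∀ n : ℕ, 0 < n → S.le g (n • p) →
      g = g * p ∧ g = p * g := by
  intro g hg p hp n _ hle
  have hq : 1 - p ∈ S.Ep := S.mem_Ep_of_mem_P (S.one_sub_mem_P hp)
  have hqp : (1 - p) * (n • p) * (1 - p) = 0 := by
    rw [mul_smul_comm, IsIdempotentElem.one_sub_mul_self hp.2, smul_zero, zero_mul]
  obtain ⟨hqg, hgq⟩ := S.mul_eq_zero_and_eq_zero_of_le hq hg hle hqp
  rw [sub_mul, one_mul, sub_eq_zero] at hqg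
  rw [mul_sub, mul_one, sub_eq_zero] at hgq
  exact ⟨hgq, hqg⟩
end

section
/- In an e-ring, if g ∈ E⁺ and gⁿ = 0 for some positive integer n, then g = 0. -/
theorem pow_mem_Ep {R : Type*} [Ring R] (S : ERing R) {g : R} (hg : g ∈ S.Ep) :
    ∀ n : ℕ, g ^ n ∈ S.Ep := by
  intro n
  induction n with
  | zero => simpa [ERing.Ep] using AddSubmonoid.subset_closure S.one_mem
  | succ k ih =>
    have := S.ax_iii g hg (g ^ k) ih (by rw [← pow_succ, ← pow_succ'])
    simpa [ERing.Ep, pow_succ'] using this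

theorem stmt7 {R : Type*} [Ring R] (S : ERing R) :
    ∀ g ∈ S.Ep, ∀ n : ℕ, 0 < n → g ^ n = 0 → g = 0 := by
  intro g hg n
  induction n using Nat.strong_induction_on with
  | _ n ih =>
    intro hn h0
    match n, hn with
    | 1, _ => simpa using h0
    | (k+2), _ =>
      have h1 : (1:R) ∈ S.Ep := AddSubmonoid.subset_closure S.one_mem
      have hpow : g ^ (k+1) ∈ S.Ep := pow_mem_Ep S hg (k+1)
      have hz : g ^ (k+1) * 1 * g ^ (k+1) = 0 := by
        have : g ^ (k+1) * 1 * g ^ (k+1) = g ^ (k+2) * g ^ k := by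
          rw [mul_one, ← pow_add, ← pow_add]; ring_nf
        rw [this, h0, zero_mul]
      have := (S.ax_v _ hpow 1 h1 hz).1
      exact ih (k+1) (by omega) (Nat.succ_pos k) (by simpa using this)
end

section
/- In an e-ring, if d,e,f ∈ E with d+e+f ∈ E and both d+e and d+f are projections, then d, e, and f are all projections. -/
namespace ERing

variable {R : Type*} [Ring R] (S : ERing R)

lemma subset_Ep : S.E ⊆ S.Ep := AddSubmonoid.subset_closure

lemma add_mem_Ep {a b : R} (ha : a ∈ S.Ep) (hb : b ∈ S.Ep) : a + b ∈ S.Ep := add_mem ha hb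

lemma Ep_subset_G : S.Ep ⊆ S.G := fun x hx =>
  ⟨x, hx, 0, AddSubmonoid.zero_mem _, (sub_zero x).symm⟩

lemma le_add_right {a b : R} (hb : b ∈ S.Ep) : S.le a (a + b) := by
  rwa [ERing.le, add_sub_cancel_left]

/-- Compressing `a` by `1 - b` gives an element `c` with `c, -c ∈ E⁺`, so `c = 0`, and
axiom (v) then kills `(1 - b) a` and `a (1 - b)`. -/
lemma mul_eq_of_le_of_isIdempotentElem {a b : R} (ha : a ∈ S.Ep) (hab : S.le a b)
    (hb : IsIdempotentElem b) (hb1 : S.le b 1) : b * a = a ∧ a * b = a := by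
  have hc : (1 - b) * a * (1 - b) ∈ S.Ep := S.ax_iv _ hb1 _ ha
  have hneg : (1 - b) * (b - a) * (1 - b) = -((1 - b) * a * (1 - b)) := by
    rw [mul_sub (1 - b) b a, hb.one_sub_mul_self, zero_sub, neg_mul]
  have hc0 : (1 - b) * a * (1 - b) = 0 :=
    S.ax_i _ hc (hneg ▸ S.ax_iv _ hb1 _ hab)
  obtain ⟨hleft, hright⟩ := S.ax_v _ hb1 _ ha hc0
  rw [sub_mul, one_mul, sub_eq_zero] at hleft
  rw [mul_sub, mul_one, sub_eq_zero] at hright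
  exact ⟨hleft.symm, hright.symm⟩

lemma mul_eq_zero_of_le_one_sub {a b : R} (ha : a ∈ S.Ep) (hab : S.le a (1 - b))
    (hb : IsIdempotentElem b) (hb0 : b ∈ S.Ep) : b * a = 0 := by
  have h := (S.mul_eq_of_le_of_isIdempotentElem ha hab hb.one_sub
    (by rwa [ERing.le, sub_sub_cancel])).1
  rwa [sub_mul, one_mul, sub_eq_self] at h

lemma isIdempotentElem_sub_of_le {a b : R} (ha : a ∈ S.Ep) (hab : S.le a b)
    (ha2 : IsIdempotentElem a) (hb : IsIdempotentElem b) (hb1 : S.le b 1) :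
    IsIdempotentElem (b - a) :=
  have h := S.mul_eq_of_le_of_isIdempotentElem ha hab hb hb1
  ha2.sub hb h.2 h.1

end ERing

theorem stmt15 {R : Type*} [Ring R] (S : ERing R) :
    ∀ d ∈ S.E, ∀ e ∈ S.E, ∀ f ∈ S.E, d + e + f ∈ S.E →
      d + e ∈ S.P → d + f ∈ S.P → d ∈ S.P ∧ e ∈ S.P ∧ f ∈ S.P := by
  intro d hd e he f hf hdef ⟨_, hp⟩ ⟨_, hq⟩
  have hdE := S.subset_Ep hd
  have heE := S.subset_Ep he
  have hfE := S.subset_Ep hf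
  have hcompl := S.subset_Ep (S.compl_mem _ hdef)
  have hp1 : S.le (d + e) 1 := by
    rw [ERing.le, show 1 - (d + e) = 1 - (d + e + f) + f by abel]
    exact S.add_mem_Ep hcompl hfE
  have hq1 : S.le (d + f) 1 := by
    rw [ERing.le, show 1 - (d + f) = 1 - (d + e + f) + e by abel]
    exact S.add_mem_Ep hcompl heE
  have hfp : S.le f (1 - (d + e)) := by
    rwa [ERing.le, show 1 - (d + e) - f = 1 - (d + e + f) by abel]
  have hdp := (S.mul_eq_of_le_of_isIdempotentElem hdE (S.le_add_right heE) hp hp1).2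
  have hdq := (S.mul_eq_of_le_of_isIdempotentElem hdE (S.le_add_right hfE) hq hq1).2
  have hpf := S.mul_eq_zero_of_le_one_sub hfE hfp hp (S.add_mem_Ep hdE heE)
  have hdf : d * f = 0 := by rw [← hdp, mul_assoc, hpf, mul_zero]
  have hd2 : IsIdempotentElem d := by
    rw [IsIdempotentElem, ← add_zero (d * d), ← hdf, ← mul_add, hdq]
  have he2 := S.isIdempotentElem_sub_of_le hdE (S.le_add_right heE) hd2 hp hp1
  have hf2 := S.isIdempotentElem_sub_of_le hdE (S.le_add_right hfE) hd2 hq hq1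
  rw [add_sub_cancel_left] at he2 hf2
  exact ⟨⟨S.Ep_subset_G hdE, hd2⟩, ⟨S.Ep_subset_G heE, he2⟩, ⟨S.Ep_subset_G hfE, hf2⟩⟩
end

section
/- In an e-ring whose directed group G is an interpolation group, every element of G commutes with every projection; consequently any two projections commute. -/
section Aux

variable {R : Type*} [Ring R] (S : ERing R)

lemma Ep_add {x y : R} (hx : x ∈ S.Ep) (hy : y ∈ S.Ep) : x + y ∈ S.Ep :=
  AddSubmonoid.add_mem _ hx hy

lemma Ep_zero : (0:R) ∈ S.Ep := AddSubmonoid.zero_mem _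

lemma E_subset_Ep {e : R} (he : e ∈ S.E) : e ∈ S.Ep := AddSubmonoid.subset_closure he

lemma one_Ep : (1:R) ∈ S.Ep := E_subset_Ep S S.one_mem

lemma proj_Ep {p : R} (hp : p ∈ S.P) : p ∈ S.Ep := by
  obtain ⟨⟨a, ha, b, hb, hab⟩, hidem⟩ := hp
  have h := S.ax_vi a ha b hb
  rw [← hab, hidem] at h
  exact h

lemma proj_compl {p : R} (hp : p ∈ S.P) : (1 - p) ∈ S.P := by
  obtain ⟨⟨a, ha, b, hb, hab⟩, hidem⟩ := hp
  refine ⟨⟨1 + b, Ep_add S (one_Ep S) hb, a, ha, by rw [hab]; noncomm_ring⟩, ?_⟩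
  have h : (1 - p) * (1 - p) = 1 - p - p + p * p := by noncomm_ring
  rw [h, hidem]; abel

lemma compress {p x : R} (hp : p ∈ S.P) (hx : x ∈ S.Ep) (hxp : (p - x) ∈ S.Ep) :
    p * x = x ∧ x * p = x := by
  have hq : (1 - p) ∈ S.P := proj_compl S hp
  have hqEp : (1 - p) ∈ S.Ep := proj_Ep S hq
  have h1 : (1-p) * (p - x) * (1-p) ∈ S.Ep := S.ax_iv _ hqEp _ hxp
  have h2 : (1-p) * x * (1-p) ∈ S.Ep := S.ax_iv _ hqEp _ hx
  have hpp : p * p = p := hp.2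
  have key : (1-p) * (p - x) * (1-p) = -((1-p) * x * (1-p)) := by
    have h0 : (1-p) * p = 0 := by rw [sub_mul, one_mul, hpp, sub_self]
    have : (1-p) * (p - x) * (1-p) = (1-p) * p * (1-p) - (1-p) * x * (1-p) := by
      noncomm_ring
    rw [this, h0, zero_mul, zero_sub]
  have hz : (1-p) * x * (1-p) = 0 := S.ax_i _ h2 (key ▸ h1)
  obtain ⟨hl, hr⟩ := S.ax_v _ hqEp _ hx hz
  constructor
  · have h : x - p * x = 0 := by rw [sub_mul, one_mul] at hl; exact hl
    exact (sub_eq_zero.mp h).symm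
  · have h : x - x * p = 0 := by rw [mul_sub, mul_one] at hr; exact hr
    exact (sub_eq_zero.mp h).symm

lemma effect_comm
    (interp : ∀ a ∈ S.G, ∀ b ∈ S.G, ∀ c ∈ S.G, ∀ d ∈ S.G,
      S.le a c → S.le a d → S.le b c → S.le b d →
      ∃ t ∈ S.G, S.le a t ∧ S.le b t ∧ S.le t c ∧ S.le t d)
    {e p : R} (he : e ∈ S.E) (hp : p ∈ S.P) : e * p = p * e := by
  have hpEp : p ∈ S.Ep := proj_Ep S hp
  have hq : (1 - p) ∈ S.P := proj_compl S hp
  have hqEp : (1 - p) ∈ S.Ep := proj_Ep S hq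
  have heEp : e ∈ S.Ep := E_subset_Ep S he
  have hGe : e ∈ S.G := ⟨e, heEp, 0, Ep_zero S, (sub_zero e).symm⟩
  have hG0 : (0:R) ∈ S.G := ⟨0, Ep_zero S, 0, Ep_zero S, (sub_zero 0).symm⟩
  have hGb : e - (1 - p) ∈ S.G := ⟨e, heEp, 1 - p, hqEp, rfl⟩
  have hGp : p ∈ S.G := hp.1
  obtain ⟨t, htG, h0t, hbt, hte, htp⟩ :=
    interp 0 hG0 (e - (1 - p)) hGb e hGe p hGp
      (by show e - 0 ∈ S.Ep; rwa [sub_zero])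
      (by show p - 0 ∈ S.Ep; rwa [sub_zero])
      (by show e - (e - (1 - p)) ∈ S.Ep; rwa [sub_sub_cancel])
      (by show p - (e - (1 - p)) ∈ S.Ep
          have h : p - (e - (1 - p)) = 1 - e := by noncomm_ring
          rw [h]; exact E_subset_Ep S (S.compl_mem e he))
  have htEp : t ∈ S.Ep := by have := h0t; rwa [ERing.le, sub_zero] at this
  have hpt : p - t ∈ S.Ep := htp
  obtain ⟨hpt1, hpt2⟩ := compress S hp htEp hpt
  have hyEp : e - t ∈ S.Ep := hte
  have hqy : (1 - p) - (e - t) ∈ S.Ep := by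
    have h : (1 - p) - (e - t) = t - (e - (1 - p)) := by noncomm_ring
    rw [h]; exact hbt
  obtain ⟨hqy1, hqy2⟩ := compress S hq hyEp hqy
  have hpy : p * (e - t) = 0 := by
    have : (e - t) - p * (e - t) = e - t := by
      calc (e - t) - p * (e - t) = (1 - p) * (e - t) := by noncomm_ring
      _ = e - t := hqy1
    have := sub_eq_self.mp this
    exact this
  have hyp : (e - t) * p = 0 := by
    have : (e - t) - (e - t) * p = e - t := by
      calc (e - t) - (e - t) * p = (e - t) * (1 - p) := by noncomm_ring
      _ = e - t := hqy2
    exact sub_eq_self.mp this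
  have h1 : e * p = t := by
    have : e * p = t * p + (e - t) * p := by noncomm_ring
    rw [this, hpt2, hyp, add_zero]
  have h2 : p * e = t := by
    have : p * e = p * t + p * (e - t) := by noncomm_ring
    rw [this, hpt1, hpy, add_zero]
  rw [h1, h2]

end Aux

theorem stmt18 {R : Type*} [Ring R] (S : ERing R)
    (interp : ∀ a ∈ S.G, ∀ b ∈ S.G, ∀ c ∈ S.G, ∀ d ∈ S.G,
      S.le a c → S.le a d → S.le b c → S.le b d →
      ∃ t ∈ S.G, S.le a t ∧ S.le b t ∧ S.le t c ∧ S.le t d) :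
    (∀ g ∈ S.G, ∀ p ∈ S.P, g * p = p * g) ∧
    (∀ p ∈ S.P, ∀ q ∈ S.P, p * q = q * p) := by
  have main : ∀ g ∈ S.G, ∀ p ∈ S.P, g * p = p * g := by
    intro g hg p hp
    have hclos : ∀ a ∈ AddSubmonoid.closure S.E, a * p = p * a := by
      intro a ha
      induction ha using AddSubmonoid.closure_induction with
      | mem x hx => exact effect_comm S interp hx hp
      | zero => simp
      | add x y _ _ hx hy => rw [add_mul, mul_add, hx, hy]
    obtain ⟨a, ha, b, hb, rfl⟩ := hg
    rw [sub_mul, mul_sub, hclos a ha, hclos b hb]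
  exact ⟨main, fun p hp q hq => main p hp.1 q hq⟩
end
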